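/- Let X be a compact metric space with a finite positive Borel measure m, let w, f : X → ℝ be continuous with ‖w‖_∞ = M attained on a set where w·f > 0, and suppose the numbers b_n = ∫_X w^{2n+1} f dm are eventually positive. If for every ε ∈ (0, M) the set U_ε = {x : |w(x)| > M − ε} satisfies ∫_{U_ε} |f| dm > 0, and w·f > 0 on U_ε, and sup{|w(x)| : x ∉ V} < M where V = {x : w(x)f(x) > 0}, then lim_{n→∞} (∫_X w^{2n+1} f dm)^{1/(2n+1)} = M. -/

import Mathlib

open Real MeasureTheory Filter Set Topology

/-!
Write `b n = ∫ w ^ (2n+1) f dm`. Since `|w| ≤ M`, `b n ≤ M ^ (2n+1) ∫ |f|`. Off the set where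
`w f > 0` one has `|w| ≤ K < M`; so for `K < a < M` the set `U = {a < |w|}`, on which the odd
powers make `w ^ (2n+1) f = |w| ^ (2n+1) |f|`, gives
`b n ≥ a ^ (2n+1) ∫_U |f| - K ^ (2n+1) ∫ |f|`, and the second term is eventually negligible.
Taking `(2n+1)`-th roots squeezes `b n ^ (1/(2n+1))` between numbers tending to `a` and to `M`.
-/

lemma tendsto_rpow_one_div_nhds_one {k : ℕ → ℕ} (hk : Tendsto k atTop atTop) {c : ℝ}
    (hc : 0 < c) : Tendsto (fun n => c ^ (1 / (k n : ℝ))) atTop (𝓝 1) := by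
  have h : Tendsto (fun n => 1 / (k n : ℝ)) atTop (𝓝 0) :=
    tendsto_const_nhds.div_atTop (tendsto_natCast_atTop_atTop.comp hk)
  simpa [Function.comp_def] using (continuousAt_const_rpow hc.ne').tendsto.comp h

lemma rpow_one_div_pow_mul {a c : ℝ} (ha : 0 ≤ a) (hc : 0 ≤ c) {k : ℕ} (hk : k ≠ 0) :
    (a ^ k * c) ^ (1 / (k : ℝ)) = a * c ^ (1 / (k : ℝ)) := by
  rw [mul_rpow (by positivity) hc, one_div, pow_rpow_inv_natCast ha hk]

theorem tendsto_rpow_one_div_of_pow_bounds {b : ℕ → ℝ} {k : ℕ → ℕ}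
    (hk : Tendsto k atTop atTop) {M : ℝ} (hM : 0 < M)
    (hupper : ∃ C, ∀ᶠ n in atTop, b n ≤ M ^ k n * C)
    (hlower : ∀ᶠ a in 𝓝[<] M, ∃ c > 0, ∀ᶠ n in atTop, a ^ k n * c ≤ b n) :
    Tendsto (fun n => b n ^ (1 / (k n : ℝ))) atTop (𝓝 M) := by
  have hk0 : ∀ᶠ n in atTop, k n ≠ 0 := hk.eventually_ne_atTop 0
  have hb0 : ∀ᶠ n in atTop, 0 < b n := by
    obtain ⟨a, ⟨c, hc, hac⟩, ha, -⟩ := (hlower.and (Ioo_mem_nhdsLT hM)).exists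
    filter_upwards [hac] with n hn
    exact lt_of_lt_of_le (by positivity) hn
  refine tendsto_order.2 ⟨fun a' ha' => ?_, fun a' ha' => ?_⟩
  · obtain ⟨a, ⟨c, hc, hac⟩, ha, -⟩ :=
      (hlower.and (Ioo_mem_nhdsLT (max_lt ha' hM))).exists
    have ha0 : 0 < a := (le_max_right _ _).trans_lt ha
    have hroot := (tendsto_rpow_one_div_nhds_one hk hc).const_mul a
    rw [mul_one] at hroot
    filter_upwards [hroot.eventually_const_lt ((le_max_left _ _).trans_lt ha), hac, hk0]
      with n hlt hn hkn
    calc a' < a * c ^ (1 / (k n : ℝ)) := hlt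
      _ = (a ^ k n * c) ^ (1 / (k n : ℝ)) :=
          (rpow_one_div_pow_mul ha0.le hc.le hkn).symm
      _ ≤ b n ^ (1 / (k n : ℝ)) := rpow_le_rpow (by positivity) hn (by positivity)
  · obtain ⟨C, hC⟩ := hupper
    have hC1 : 0 < max C 1 := zero_lt_one.trans_le (le_max_right C 1)
    have hroot := (tendsto_rpow_one_div_nhds_one hk hC1).const_mul M
    rw [mul_one] at hroot
    filter_upwards [hroot.eventually_lt_const ha', hC, hk0, hb0] with n hlt hn hkn hb
    calc b n ^ (1 / (k n : ℝ)) ≤ (M ^ k n * max C 1) ^ (1 / (k n : ℝ)) := by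
          refine rpow_le_rpow hb.le (hn.trans ?_) (by positivity)
          gcongr
          exact le_max_left C 1
      _ = M * max C 1 ^ (1 / (k n : ℝ)) := rpow_one_div_pow_mul hM.le (by positivity) hkn
      _ < a' := hlt

lemma eventually_pow_mul_half_le_pow_mul_sub_pow_mul {a K : ℝ} (hK : 0 ≤ K) (hKa : K < a)
    {c : ℝ} (hc : 0 < c) (C : ℝ) :
    ∀ᶠ n : ℕ in atTop, a ^ n * (c / 2) ≤ a ^ n * c - K ^ n * C := by
  have ha : 0 < a := hK.trans_lt hKa
  have hratio : Tendsto (fun n : ℕ => (K / a) ^ n * C) atTop (𝓝 0) := by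
    simpa using (tendsto_pow_atTop_nhds_zero_of_lt_one (div_nonneg hK ha.le)
      ((div_lt_one ha).2 hKa)).mul_const C
  filter_upwards [hratio.eventually_le_const (half_pos hc)] with n hn
  have hKC : K ^ n * C = a ^ n * ((K / a) ^ n * C) := by
    rw [div_pow]; field_simp
  rw [hKC]
  nlinarith [pow_pos ha n]

lemma odd_pow_mul_eq_abs {a b : ℝ} {k : ℕ} (hk : Odd k) (hab : 0 ≤ a * b) :
    a ^ k * b = |a| ^ k * |b| := by
  obtain ⟨j, rfl⟩ := hk
  calc a ^ (2 * j + 1) * b = (a ^ 2) ^ j * (a * b) := by ring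
    _ = (|a| ^ 2) ^ j * |a * b| := by rw [sq_abs, abs_of_nonneg hab]
    _ = |a| ^ (2 * j + 1) * |b| := by rw [abs_mul]; ring

section

variable {α : Type*} {w f : α → ℝ} {k : ℕ}

lemma indicator_sub_le_odd_pow_mul
    (hk : Odd k) {U : Set α} {a K : ℝ} (ha : 0 ≤ a) (hK : 0 ≤ K)
    (hU : ∀ x ∈ U, a ≤ |w x| ∧ 0 ≤ w x * f x) (hKw : ∀ x, w x * f x < 0 → |w x| ≤ K)
    (x : α) : U.indicator (fun x => a ^ k * |f x|) x - K ^ k * |f x| ≤ w x ^ k * f x := by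
  by_cases hx : x ∈ U
  · obtain ⟨haw, hwf⟩ := hU x hx
    rw [indicator_of_mem hx, odd_pow_mul_eq_abs hk hwf]
    calc a ^ k * |f x| - K ^ k * |f x| ≤ a ^ k * |f x| := sub_le_self _ (by positivity)
      _ ≤ |w x| ^ k * |f x| := by gcongr
  rw [indicator_of_notMem hx, zero_sub]
  rcases le_or_gt 0 (w x * f x) with hwf | hwf
  · rw [odd_pow_mul_eq_abs hk hwf]
    exact (neg_nonpos.2 (by positivity)).trans (by positivity)
  · calc -(K ^ k * |f x|) ≤ -(|w x| ^ k * |f x|) := by gcongr; exact hKw x hwf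
      _ = -|w x ^ k * f x| := by rw [abs_mul, abs_pow]
      _ ≤ w x ^ k * f x := neg_abs_le _

variable [MeasurableSpace α] {μ : Measure α}

lemma integral_pow_mul_le {M : ℝ} (hwM : ∀ x, |w x| ≤ M) (hf : Integrable f μ)
    (hwf : Integrable (fun x => w x ^ k * f x) μ) :
    ∫ x, w x ^ k * f x ∂μ ≤ M ^ k * ∫ x, |f x| ∂μ := by
  rw [← integral_const_mul]
  refine integral_mono hwf (hf.abs.const_mul _) fun x => ?_
  calc w x ^ k * f x ≤ |w x ^ k * f x| := le_abs_self _
    _ = |w x| ^ k * |f x| := by rw [abs_mul, abs_pow]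
    _ ≤ M ^ k * |f x| := by gcongr; exact hwM x

lemma integral_odd_pow_mul_ge (hk : Odd k) {U : Set α} (hUm : MeasurableSet U) {a K : ℝ}
    (ha : 0 ≤ a) (hK : 0 ≤ K) (hU : ∀ x ∈ U, a ≤ |w x| ∧ 0 ≤ w x * f x)
    (hKw : ∀ x, w x * f x < 0 → |w x| ≤ K) (hf : Integrable f μ)
    (hwf : Integrable (fun x => w x ^ k * f x) μ) :
    a ^ k * (∫ x in U, |f x| ∂μ) - K ^ k * (∫ x, |f x| ∂μ) ≤ ∫ x, w x ^ k * f x ∂μ := by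
  have hind : Integrable (U.indicator fun x => a ^ k * |f x|) μ :=
    (hf.abs.const_mul _).indicator hUm
  calc a ^ k * (∫ x in U, |f x| ∂μ) - K ^ k * (∫ x, |f x| ∂μ)
        = ∫ x, (U.indicator (fun x => a ^ k * |f x|) x - K ^ k * |f x|) ∂μ := by
          rw [integral_sub hind (hf.abs.const_mul _), integral_indicator hUm,
            integral_const_mul, integral_const_mul]
    _ ≤ ∫ x, w x ^ k * f x ∂μ :=
      integral_mono (hind.sub (hf.abs.const_mul _)) hwf
        (indicator_sub_le_odd_pow_mul hk ha hK hU hKw)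

end

theorem stmt2_general {X : Type*} [MetricSpace X] [CompactSpace X]
    [MeasurableSpace X] [BorelSpace X]
    (m : Measure X) [IsFiniteMeasure m]
    (w f : X → ℝ) (hw : Continuous w) (hf : Continuous f)
    (M : ℝ) (hM : M = ⨆ x, |w x|)
    (hU : ∀ ε ∈ Set.Ioo (0:ℝ) M,
      (0 < ∫ x in {x | M - ε < |w x|}, |f x| ∂m) ∧
      ∀ x ∈ {x | M - ε < |w x|}, 0 < w x * f x)
    (hW : sSup ((fun x => |w x|) '' {x | ¬ 0 < w x * f x}) < M) :
    Tendsto (fun n : ℕ => (∫ x, (w x)^(2*n+1) * f x ∂m) ^ ((1:ℝ)/(2*n+1)))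
      atTop (nhds M) := by
  have hintf : Integrable f m :=
    hf.integrable_of_hasCompactSupport (HasCompactSupport.of_compactSpace f)
  have hintwf (k : ℕ) : Integrable (fun x => w x ^ k * f x) m :=
    ((hw.pow k).mul hf).integrable_of_hasCompactSupport (HasCompactSupport.of_compactSpace _)
  have hwM : ∀ x, |w x| ≤ M := fun x =>
    hM ▸ le_ciSup (isCompact_range hw.abs).bddAbove x
  set K := sSup ((fun x => |w x|) '' {x | ¬ 0 < w x * f x})
  have hK : 0 ≤ K := Real.sSup_nonneg (by rintro _ ⟨x, -, rfl⟩; exact abs_nonneg _)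
  have hKw : ∀ x, w x * f x < 0 → |w x| ≤ K := fun x hx =>
    le_csSup (bddAbove_def.2 ⟨M, by rintro _ ⟨y, -, rfl⟩; exact hwM y⟩) ⟨x, hx.not_gt, rfl⟩
  have hk : Tendsto (fun n : ℕ => 2 * n + 1) atTop atTop :=
    tendsto_atTop_mono (fun n => by dsimp; omega) tendsto_id
  have hupper : ∃ C, ∀ᶠ n in atTop, ∫ x, w x ^ (2 * n + 1) * f x ∂m ≤ M ^ (2 * n + 1) * C :=
    ⟨_, .of_forall fun n => integral_pow_mul_le hwM hintf (hintwf _)⟩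
  have hlower : ∀ᶠ a in 𝓝[<] M, ∃ c > 0,
      ∀ᶠ n in atTop, a ^ (2 * n + 1) * c ≤ ∫ x, w x ^ (2 * n + 1) * f x ∂m := by
    filter_upwards [Ioo_mem_nhdsLT hW] with a ⟨hKa, haM⟩
    obtain ⟨hc, hsgn⟩ := hU (M - a) ⟨by linarith, by linarith⟩
    simp only [sub_sub_cancel] at hc hsgn
    refine ⟨_, half_pos hc, ?_⟩
    filter_upwards [hk.eventually
      (eventually_pow_mul_half_le_pow_mul_sub_pow_mul hK hKa hc (∫ x, |f x| ∂m))] with n hn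
    exact hn.trans (integral_odd_pow_mul_ge ⟨n, rfl⟩
      (isOpen_lt continuous_const hw.abs).measurableSet (hK.trans hKa.le) hK
      (fun x hx => ⟨hx.le, (hsgn x hx).le⟩) hKw hintf (hintwf _))
  simpa using tendsto_rpow_one_div_of_pow_bounds hk (hK.trans_lt hW) hupper hlower

/-- Abstract version of Proposition 2.4: on a compact metric space `X` with a finite
positive Borel measure `m`, for continuous `w, f` with `M = ‖w‖_∞`, under the stated
hypotheses the odd-power integrals satisfy
`lim_{n→∞} (∫ w^{2n+1} f dm)^{1/(2n+1)} = M`. -/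
theorem stmt2 {X : Type*} [MetricSpace X] [CompactSpace X]
    [MeasurableSpace X] [BorelSpace X]
    (m : Measure X) [IsFiniteMeasure m]
    (w f : X → ℝ) (hw : Continuous w) (hf : Continuous f)
    (M : ℝ) (hM : M = ⨆ x, |w x|)
    (hpos : ∀ᶠ n : ℕ in atTop, 0 < ∫ x, (w x)^(2*n+1) * f x ∂m)
    (hU : ∀ ε ∈ Set.Ioo (0:ℝ) M,
      (0 < ∫ x in {x | M - ε < |w x|}, |f x| ∂m) ∧
      ∀ x ∈ {x | M - ε < |w x|}, 0 < w x * f x)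
    (hW : sSup ((fun x => |w x|) '' {x | ¬ 0 < w x * f x}) < M) :
    Tendsto (fun n : ℕ => (∫ x, (w x)^(2*n+1) * f x ∂m) ^ ((1:ℝ)/(2*n+1)))
      atTop (nhds M) :=
  stmt2_general m w f hw hf M hM hU hW
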